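/- arXiv:2006.13516 — 2 statements merged into one kernel-verified Lean document; each statement's English description precedes it below -/
import Mathlib

section
/- Let τ > 0 and let m > 1 be an integer. For c > 0 set K̃_l(c) = max(0, 1 − (πl/τ)^m·c) for l ≥ 1. Then lim_{c → 0⁺} c^{−1/m} · ∑_{l=1}^∞ (τ/(πl))²·( K̃_l(c)² − 1 ) = −(τ/π)·(2m²)/((2m−1)(m−1)). -/
open Real Filter MeasureTheory Set Topology

/-!
With `t = c^{1/m}` and `s = (π/τ) t`, the `l`-th term of the series is `t² h(s(l+1))`, where
`h(x) = (((1 - x^m)_+)² - 1)/x²`; hence the scaled series is `τ/π` times the Riemann sum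
`s ∑ₗ h(s(l+1))`. That sum is the integral over `(0, ∞)` of the step function `x ↦ h(s⌈x/s⌉)`,
which is dominated by the integrable decreasing bound `4/(1+x²)` of `|h|`, so by dominated
convergence it tends to `∫₀^∞ h = 1/(2m-1) - 2/(m-1) - 1 = -2m²/((2m-1)(m-1))` as `s → 0⁺`.
-/

section NatCeil

variable {α : Type*} [Semiring α] [LinearOrder α] [FloorSemiring α]

theorem mem_Ioc_natCast_iff_natCeil_eq {x : α} {n : ℕ} :
    x ∈ Ioc (n : α) (n + 1) ↔ ⌈x⌉₊ = n + 1 := by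
  rw [Nat.ceil_eq_iff n.succ_ne_zero]
  simp

theorem iUnion_Ioc_natCast [IsStrictOrderedRing α] :
    ⋃ n : ℕ, Ioc (n : α) (n + 1) = Ioi 0 := by
  ext x
  simp only [mem_iUnion, mem_Ioc_natCast_iff_natCeil_eq, mem_Ioi]
  constructor
  · rintro ⟨n, hn⟩
    exact Nat.ceil_pos.mp (hn ▸ n.succ_pos)
  · intro hx
    exact ⟨⌈x⌉₊ - 1, (Nat.succ_pred_eq_of_pos (Nat.ceil_pos.mpr hx)).symm⟩

theorem pairwise_disjoint_Ioc_natCast :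
    Pairwise (Function.onFun Disjoint fun n : ℕ => Ioc (n : α) (n + 1)) :=
  fun m n hmn => disjoint_left.mpr fun x hm hn => hmn <| by
    rw [mem_Ioc_natCast_iff_natCeil_eq] at hm hn
    omega

end NatCeil

theorem mul_natCeil_inv_mul_mem_Ico {s x : ℝ} (hs : 0 < s) (hx : 0 ≤ x) :
    s * ⌈s⁻¹ * x⌉₊ ∈ Ico x (x + s) := by
  have hle := Nat.le_ceil (s⁻¹ * x)
  have hlt := Nat.ceil_lt_add_one (by positivity : 0 ≤ s⁻¹ * x)
  constructor
  · calc x = s * (s⁻¹ * x) := by field_simp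
      _ ≤ s * ⌈s⁻¹ * x⌉₊ := by gcongr
  · calc s * ⌈s⁻¹ * x⌉₊ < s * (s⁻¹ * x + 1) := by gcongr
      _ = x + s := by field_simp

section RiemannSum

variable {E : Type*} [NormedAddCommGroup E] [NormedSpace ℝ E] [CompleteSpace E]

theorem hasSum_setIntegral_Ioi_comp_natCeil {φ : ℕ → E}
    (hφ : IntegrableOn (fun x : ℝ => φ ⌈x⌉₊) (Ioi 0)) :
    HasSum (fun n : ℕ => φ (n + 1)) (∫ x in Ioi (0 : ℝ), φ ⌈x⌉₊) := by
  rw [← iUnion_Ioc_natCast] at hφ ⊢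
  convert hasSum_integral_iUnion (fun _ => measurableSet_Ioc) pairwise_disjoint_Ioc_natCast hφ
    using 1
  funext n
  rw [setIntegral_congr_fun measurableSet_Ioc fun x hx => by
      rw [mem_Ioc_natCast_iff_natCeil_eq.mp hx], setIntegral_const]
  simp

theorem setIntegral_Ioi_comp_mul_natCeil {f : ℝ → E} {s : ℝ} (hs : 0 < s)
    (hf : IntegrableOn (fun x => f (s * ⌈s⁻¹ * x⌉₊)) (Ioi 0)) :
    ∫ x in Ioi (0 : ℝ), f (s * ⌈s⁻¹ * x⌉₊) = s • ∑' n : ℕ, f (s * (n + 1)) := by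
  have hs' : 0 < s⁻¹ := inv_pos.mpr hs
  rw [integrableOn_Ioi_comp_mul_left_iff (fun y => f (s * ⌈y⌉₊)) 0 hs', mul_zero] at hf
  rw [integral_comp_mul_left_Ioi (fun y => f (s * ⌈y⌉₊)) 0 hs', mul_zero, inv_inv,
    ← (hasSum_setIntegral_Ioi_comp_natCeil (φ := fun n => f (s * n)) hf).tsum_eq]
  push_cast
  rfl

theorem tendsto_smul_tsum_nat_succ_setIntegral_Ioi {f : ℝ → E} {G : ℝ → ℝ}
    (hf : ContinuousOn f (Ioi 0)) (hG : IntegrableOn G (Ioi 0)) (hG_anti : AntitoneOn G (Ioi 0))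
    (hfG : ∀ x ∈ Ioi 0, ‖f x‖ ≤ G x) :
    Tendsto (fun s => s • ∑' n : ℕ, f (s * (n + 1))) (𝓝[>] 0) (𝓝 (∫ x in Ioi 0, f x)) := by
  set step : ℝ → ℝ → E := fun s x => f (s * ⌈s⁻¹ * x⌉₊)
  have step_meas (s : ℝ) : AEStronglyMeasurable (step s) (volume.restrict (Ioi 0)) :=
    ((StronglyMeasurable.of_discrete (f := fun n : ℕ => f (s * n))).comp_measurable
      (Nat.measurable_ceil.comp (measurable_const_mul s⁻¹))).aestronglyMeasurable
  have step_bound {s : ℝ} (hs : 0 < s) : ∀ᵐ x ∂volume.restrict (Ioi 0), ‖step s x‖ ≤ G x := by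
    refine (ae_restrict_iff' measurableSet_Ioi).mpr (.of_forall fun x (hx : 0 < x) => ?_)
    have hx_le := (mul_natCeil_inv_mul_mem_Ico hs hx.le).1
    exact (hfG _ (hx.trans_le hx_le)).trans (hG_anti hx (hx.trans_le hx_le) hx_le)
  have step_tendsto {x : ℝ} (hx : 0 < x) :
      Tendsto (fun s => s * (⌈s⁻¹ * x⌉₊ : ℝ)) (𝓝[>] 0) (𝓝 x) := by
    have upper : Tendsto (fun s : ℝ => x + s) (𝓝[>] 0) (𝓝 x) :=
      ((continuous_const_add x).tendsto' 0 x (add_zero x)).mono_left nhdsWithin_le_nhds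
    refine tendsto_of_tendsto_of_tendsto_of_le_of_le' tendsto_const_nhds upper ?_ ?_ <;>
      filter_upwards [self_mem_nhdsWithin] with s (hs : 0 < s)
    exacts [(mul_natCeil_inv_mul_mem_Ico hs hx.le).1, (mul_natCeil_inv_mul_mem_Ico hs hx.le).2.le]
  have step_lim :
      Tendsto (fun s => ∫ x in Ioi 0, step s x) (𝓝[>] 0) (𝓝 (∫ x in Ioi 0, f x)) := by
    refine tendsto_integral_filter_of_dominated_convergence G (.of_forall step_meas)
      (eventually_nhdsWithin_of_forall fun s hs => step_bound hs) hG ?_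
    refine (ae_restrict_iff' measurableSet_Ioi).mpr (.of_forall fun x (hx : 0 < x) => ?_)
    exact (hf.continuousAt (Ioi_mem_nhds hx)).tendsto.comp (step_tendsto hx)
  refine step_lim.congr' (eventually_nhdsWithin_of_forall fun s (hs : 0 < s) => ?_)
  exact setIntegral_Ioi_comp_mul_natCeil hs (hG.mono' (step_meas s) (step_bound hs))

end RiemannSum

noncomputable def varianceReductionDensity (m : ℕ) (x : ℝ) : ℝ :=
  ((max 0 (1 - x ^ m)) ^ 2 - 1) / x ^ 2

theorem varianceReductionDensity_of_le_one (k : ℕ) {x : ℝ} (hx₀ : 0 < x) (hx₁ : x ≤ 1) :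
    varianceReductionDensity (k + 2) x = x ^ (2 * k + 2) - 2 * x ^ k := by
  rw [varianceReductionDensity, max_eq_right (sub_nonneg.mpr (pow_le_one₀ hx₀.le hx₁))]
  field_simp
  ring

theorem varianceReductionDensity_of_one_le (m : ℕ) {x : ℝ} (hx : 1 ≤ x) :
    varianceReductionDensity m x = -(x ^ 2)⁻¹ := by
  rw [varianceReductionDensity, max_eq_left (sub_nonpos.mpr (one_le_pow₀ hx))]
  field_simp
  norm_num

theorem continuousOn_varianceReductionDensity (m : ℕ) :
    ContinuousOn (varianceReductionDensity m) (Ioi 0) :=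
  ContinuousOn.div (by fun_prop) (by fun_prop) fun x (hx : 0 < x) => by positivity

theorem abs_varianceReductionDensity_le {m : ℕ} (hm : 2 ≤ m) {x : ℝ} (hx : 0 < x) :
    |varianceReductionDensity m x| ≤ 4 * (1 + x ^ 2)⁻¹ := by
  rcases le_total x 1 with hx₁ | hx₁
  · obtain ⟨k, rfl⟩ := Nat.exists_eq_add_of_le' hm
    rw [varianceReductionDensity_of_le_one k hx hx₁]
    have hk : x ^ k ≤ 1 := pow_le_one₀ hx.le hx₁
    have hk2 : x ^ (2 * k + 2) ≤ x ^ k := pow_le_pow_of_le_one hx.le hx₁ (by omega)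
    calc |x ^ (2 * k + 2) - 2 * x ^ k| ≤ 2 :=
          abs_le.mpr ⟨by linarith [pow_nonneg hx.le (2 * k + 2)], by linarith [pow_nonneg hx.le k]⟩
      _ ≤ 4 * (1 + x ^ 2)⁻¹ := by
          rw [le_mul_inv_iff₀ (by positivity)]
          nlinarith
  · rw [varianceReductionDensity_of_one_le m hx₁, abs_neg, abs_of_pos (by positivity)]
    rw [← div_eq_mul_inv, le_div_iff₀ (by positivity), inv_mul_le_iff₀ (by positivity)]
    nlinarith

theorem integrableOn_varianceReductionDensity {m : ℕ} (hm : 2 ≤ m) :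
    IntegrableOn (varianceReductionDensity m) (Ioi 0) :=
  (integrable_inv_one_add_sq.const_mul 4).integrableOn.mono'
    ((continuousOn_varianceReductionDensity m).aestronglyMeasurable measurableSet_Ioi)
    ((ae_restrict_iff' measurableSet_Ioi).mpr
      (.of_forall fun _ hx => abs_varianceReductionDensity_le hm hx))

theorem setIntegral_varianceReductionDensity {m : ℕ} (hm : 2 ≤ m) :
    ∫ x in Ioi 0, varianceReductionDensity m x = -(2 * (m : ℝ) ^ 2) / ((2 * m - 1) * (m - 1)) := by
  have hint := integrableOn_varianceReductionDensity hm
  obtain ⟨k, rfl⟩ := Nat.exists_eq_add_of_le' hm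
  have near : ∫ x in (0 : ℝ)..1, varianceReductionDensity (k + 2) x
      = ∫ x in (0 : ℝ)..1, (x ^ (2 * k + 2) - 2 * x ^ k) :=
    intervalIntegral.integral_congr_ae (.of_forall fun x hx => by
      rw [uIoc_of_le zero_le_one] at hx
      exact varianceReductionDensity_of_le_one k hx.1 hx.2)
  have far : ∫ x in Ioi (1 : ℝ), varianceReductionDensity (k + 2) x
      = ∫ x in Ioi (1 : ℝ), -x ^ (-2 : ℝ) :=
    setIntegral_congr_fun measurableSet_Ioi fun x (hx : 1 < x) => by
      rw [varianceReductionDensity_of_one_le _ hx.le, rpow_neg (by positivity), rpow_two]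
  rw [← intervalIntegral.integral_interval_add_Ioi hint
      (hint.mono_set (Ioi_subset_Ioi zero_le_one)), near, far,
    intervalIntegral.integral_sub (intervalIntegral.intervalIntegrable_pow _)
      ((intervalIntegral.intervalIntegrable_pow _).const_mul 2),
    intervalIntegral.integral_const_mul, integral_pow, integral_pow, integral_neg,
    integral_Ioi_rpow_of_lt (by norm_num) one_pos]
  push_cast
  rw [show 2 * ((k : ℝ) + 2) - 1 = 2 * k + 3 by ring, show (k : ℝ) + 2 - 1 = k + 1 by ring]
  norm_num
  field_simp
  ring

theorem tendsto_mul_tsum_varianceReductionDensity {m : ℕ} (hm : 2 ≤ m) :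
    Tendsto (fun s => s * ∑' n : ℕ, varianceReductionDensity m (s * (n + 1))) (𝓝[>] 0)
      (𝓝 (-(2 * (m : ℝ) ^ 2) / ((2 * m - 1) * (m - 1)))) := by
  rw [← setIntegral_varianceReductionDensity hm]
  refine tendsto_smul_tsum_nat_succ_setIntegral_Ioi (continuousOn_varianceReductionDensity m)
    (integrable_inv_one_add_sq.const_mul 4).integrableOn ?_
    fun x hx => abs_varianceReductionDensity_le hm hx
  intro x (hx : 0 < x) y _ hxy
  dsimp only
  gcongr

theorem sq_mul_varianceReductionDensity_mul (m : ℕ) {a t : ℝ} (ha : a ≠ 0) (ht : t ≠ 0) :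
    t ^ 2 * varianceReductionDensity m (a * t)
      = (a⁻¹) ^ 2 * ((max 0 (1 - a ^ m * t ^ m)) ^ 2 - 1) := by
  rw [varianceReductionDensity, mul_pow a t m]
  field_simp

theorem rpow_neg_inv_mul_tsum_eq_riemannSum {a τ c : ℝ} {m : ℕ} (ha : a ≠ 0) (hτ : τ ≠ 0)
    (hm : m ≠ 0) (hc : 0 < c) :
    c ^ (-(1 : ℝ) / m) * ∑' l : ℕ, (τ / (a * (l + 1))) ^ 2 *
        ((max 0 (1 - (a * (l + 1) / τ) ^ m * c)) ^ 2 - 1)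
      = τ / a * (a / τ * c ^ (m⁻¹ : ℝ) *
          ∑' l : ℕ, varianceReductionDensity m (a / τ * c ^ (m⁻¹ : ℝ) * (l + 1))) := by
  set t := c ^ (m⁻¹ : ℝ)
  have ht : 0 < t := rpow_pos_of_pos hc _
  have htm : t ^ m = c := rpow_inv_natCast_pow hc.le hm
  have hterm (l : ℕ) : (τ / (a * (l + 1))) ^ 2 * ((max 0 (1 - (a * (l + 1) / τ) ^ m * c)) ^ 2 - 1)
      = t ^ 2 * varianceReductionDensity m (a / τ * t * (l + 1)) := by
    rw [show a / τ * t * (l + 1) = a * (l + 1) / τ * t by ring,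
      sq_mul_varianceReductionDensity_mul m (by positivity) ht.ne', inv_div, htm]
  have hinv : c ^ (-(1 : ℝ) / m) = t⁻¹ := by rw [neg_div, one_div, rpow_neg hc.le]
  rw [tsum_congr hterm, tsum_mul_left, hinv]
  field_simp

theorem tendsto_const_mul_rpow_nhdsGT_zero {a r : ℝ} (ha : 0 < a) (hr : 0 < r) :
    Tendsto (fun c => a * c ^ r) (𝓝[>] 0) (𝓝[>] 0) := by
  refine tendsto_nhdsWithin_iff.mpr ⟨?_, eventually_nhdsWithin_of_forall fun c (hc : 0 < c) =>
    mul_pos ha (rpow_pos_of_pos hc r)⟩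
  have : Tendsto (fun c : ℝ => a * c ^ r) (𝓝 0) (𝓝 (a * 0 ^ r)) :=
    (continuous_const.mul (continuous_rpow_const hr.le)).tendsto 0 |>.congr fun _ => rfl
  simpa [zero_rpow hr.ne'] using this.mono_left nhdsWithin_le_nhds

/-- Riemann-sum asymptotics for the variance-reduction series:
with `K̃_l(c) = max(0, 1 - (πl/τ)^m c)`,
`c^{-1/m} ∑_{l≥1} (τ/(πl))² (K̃_l(c)² - 1) → -(τ/π)·2m²/((2m-1)(m-1))` as `c → 0⁺`. -/
theorem variance_reduction_series_limit
    (τ : ℝ) (hτ : 0 < τ) (m : ℕ) (hm : 1 < m) :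
    Tendsto (fun c : ℝ =>
        c ^ (-(1:ℝ)/(m:ℝ)) *
          ∑' l : ℕ, (τ/(π*(l+1)))^2 * ((max 0 (1 - (π*(l+1)/τ)^m * c))^2 - 1))
      (nhdsWithin 0 (Set.Ioi 0))
      (nhds (-(τ/π) * (2*(m:ℝ)^2) / ((2*(m:ℝ)-1)*((m:ℝ)-1)))) := by
  have hs := tendsto_const_mul_rpow_nhdsGT_zero (div_pos pi_pos hτ)
    (by positivity : 0 < (m⁻¹ : ℝ))
  have hlim := ((tendsto_mul_tsum_varianceReductionDensity hm).comp hs).const_mul (τ / π)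
  rw [show -(τ / π) * (2 * (m : ℝ) ^ 2) / ((2 * m - 1) * (m - 1))
      = τ / π * (-(2 * (m : ℝ) ^ 2) / ((2 * m - 1) * (m - 1))) by ring]
  refine hlim.congr' (eventually_nhdsWithin_of_forall fun c (hc : 0 < c) => ?_)
  exact (rpow_neg_inv_mul_tsum_eq_riemannSum pi_ne_zero hτ.ne' (by omega) hc).symm
end

section
/- Let τ > 0, S > 0, R > 0, and let m > 1 be an integer. For c > 0 set K̃_l(c) = max(0, 1 − (πl/τ)^m·c) and H_n(c) = (S/n)·∑_{l=1}^∞ (τ/(πl))²·(K̃_l(c)² − 1) + c²·R. With α*_n = ( (S/(nR))·(τ/π)·m/((2m−1)(m−1)) )^{m/(2m−1)} and Π_τ = (2m−1)·R·( (Sτ/(πR))·m/((2m−1)(m−1)) )^{2m/(2m−1)}, one has lim_{n→∞} n^{2m/(2m−1)} · H_n(α*_n) = −Π_τ. -/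
open Real Filter

/-- The optimal shrinkage level `α*_n`. -/
noncomputable def alphaStar (τ S R : ℝ) (m : ℕ) (n : ℕ) : ℝ :=
  (S/((n:ℝ)*R) * (τ/π) * (m:ℝ) / ((2*(m:ℝ)-1)*((m:ℝ)-1))) ^ ((m:ℝ)/(2*(m:ℝ)-1))

/-- The envelope `H_n(c) = (S/n) ∑_{l≥1} (τ/(πl))² (K̃_l(c)² - 1) + c² R` with
kernel weights `K̃_l(c) = max(0, 1 - (πl/τ)^m c)`. -/
noncomputable def Hn (τ S R : ℝ) (m : ℕ) (n : ℕ) (c : ℝ) : ℝ :=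
  (S/(n:ℝ)) * ∑' l : ℕ, (τ/(π*(l+1)))^2 * ((max 0 (1 - (π*(l+1)/τ)^m * c))^2 - 1)
    + c^2 * R

/-- The Pinsker-type second order constant `Π_τ`. -/
noncomputable def PiTau (τ S R : ℝ) (m : ℕ) : ℝ :=
  (2*(m:ℝ)-1) * R *
    ((S*τ/(π*R) * (m:ℝ) / ((2*(m:ℝ)-1)*((m:ℝ)-1))) ^ ((2*(m:ℝ))/(2*(m:ℝ)-1)))

open Finset Topology

/-!
Put `T = (τ/π) c^(-1/m)`, so that `K̃_l(c) = (1 - (l/T)^m)₊` vanishes exactly for `l > T`.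
Splitting the series at `⌊T⌋`, the terms with `l ≤ T` are polynomials in `l/T` and the others
equal `-1/l²`. The power sums `∑_{l ≤ T} l^k ~ T^(k+1)/(k+1)` (comparison with `∫ x^k`) and the
tail `∑_{l > T} 1/l² ~ 1/T` (squeezed between two telescoping series) give
`T ∑_l (K̃_l² - 1)/l² → 1/(2m-1) - 2/(m-1) - 1`. For `c = α*_n` one has `T ∝ n^(1/(2m-1))` and
`n^(2m/(2m-1)) c²` is constant, so `n^(2m/(2m-1)) H_n(α*_n)` is an affine function of that
quantity, whose limit is then `-Π_τ` by direct computation.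
-/

lemma tendsto_nat_floor_add_div_atTop {K : Type*} [TopologicalSpace K] [Field K] [LinearOrder K]
    [IsStrictOrderedRing K] [OrderTopology K] [FloorRing K] (s : K) :
    Tendsto (fun x : K => ((⌊x⌋₊ : K) + s) / x) atTop (𝓝 1) := by
  have h := tendsto_nat_floor_div_atTop.add (tendsto_inv_atTop_zero.const_mul s)
  rw [mul_zero, add_zero] at h
  exact h.congr fun x => by rw [add_div, div_eq_mul_inv s]

lemma sum_range_succ_pow_bounds (k N : ℕ) :
    (N : ℝ) ^ (k + 1) / (k + 1) ≤ ∑ i ∈ range N, ((i : ℝ) + 1) ^ k ∧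
      ∑ i ∈ range N, ((i : ℝ) + 1) ^ k ≤ ((N : ℝ) + 1) ^ (k + 1) / (k + 1) := by
  have hmono : ∀ x₀ : ℝ, 0 ≤ x₀ → MonotoneOn (fun x : ℝ => x ^ k) (Set.Icc x₀ (x₀ + N)) :=
    fun x₀ h₀ x hx _ _ hxy => pow_le_pow_left₀ (h₀.trans hx.1) hxy k
  constructor
  · have h := (hmono 0 le_rfl).integral_le_sum
    simp only [zero_add, integral_pow, Nat.cast_add, Nat.cast_one] at h
    simpa [add_comm] using h
  · have h := (hmono 1 zero_le_one).sum_le_integral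
    simp only [integral_pow, one_pow] at h
    calc ∑ i ∈ range N, ((i : ℝ) + 1) ^ k = ∑ i ∈ range N, (1 + (i : ℝ)) ^ k := by
          simp only [add_comm]
      _ ≤ ((1 + N) ^ (k + 1) - 1) / (k + 1) := h
      _ ≤ ((N : ℝ) + 1) ^ (k + 1) / (k + 1) := by
          rw [add_comm (1 : ℝ)]; gcongr; linarith

lemma tendsto_sum_range_floor_pow_div (k : ℕ) :
    Tendsto (fun T : ℝ => (∑ i ∈ range ⌊T⌋₊, ((i : ℝ) + 1) ^ k) / T ^ (k + 1)) atTop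
      (𝓝 (1 / (k + 1))) := by
  have hlim : ∀ s : ℝ, Tendsto (fun T : ℝ => (((⌊T⌋₊ : ℝ) + s) / T) ^ (k + 1) / (k + 1))
      atTop (𝓝 (1 / (k + 1))) := fun s => by
    simpa using ((tendsto_nat_floor_add_div_atTop s).pow (k + 1)).div_const ((k : ℝ) + 1)
  refine tendsto_of_tendsto_of_tendsto_of_le_of_le' (by simpa using hlim 0) (hlim 1) ?_ ?_ <;>
    filter_upwards [eventually_gt_atTop 0] with T hT
  · rw [div_pow, div_div, mul_comm, ← div_div]
    gcongr
    exact (sum_range_succ_pow_bounds k _).1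
  · rw [div_pow, div_div, mul_comm, ← div_div]
    gcongr
    exact (sum_range_succ_pow_bounds k _).2

lemma hasSum_one_div_sub_one_div_add_one {x : ℝ} (hx : 0 < x) :
    HasSum (fun l : ℕ => 1 / (x + l) - 1 / (x + l + 1)) (1 / x) := by
  have hpartial : ∀ n : ℕ,
      ∑ l ∈ range n, (1 / (x + l) - 1 / (x + l + 1)) = 1 / x - 1 / (x + n) := by
    intro n
    induction n with
    | zero => simp
    | succ n ih => rw [sum_range_succ, ih]; push_cast; ring
  rw [hasSum_iff_tendsto_nat_of_nonneg]
  · simp only [hpartial]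
    have h := tendsto_inv_atTop_zero.comp
      (tendsto_atTop_add_const_left _ x tendsto_natCast_atTop_atTop)
    simpa using (tendsto_const_nhds (x := 1 / x)).sub h
  · intro l
    exact sub_nonneg.2 (one_div_le_one_div_of_le (by positivity) (by linarith))

lemma tsum_one_div_add_sq_bounds {x : ℝ} (hx : 0 ≤ x) :
    Summable (fun l : ℕ => (1 / (x + l + 1)) ^ 2) ∧
      1 / (x + 1) ≤ ∑' l : ℕ, (1 / (x + l + 1)) ^ 2 ∧
      ∑' l : ℕ, (1 / (x + l + 1)) ^ 2 ≤ 1 / (x + 1 / 2) := by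
  have hlower := hasSum_one_div_sub_one_div_add_one (x := x + 1) (by linarith)
  have hupper := hasSum_one_div_sub_one_div_add_one (x := x + 1 / 2) (by linarith)
  have hle : ∀ l : ℕ,
      (1 / (x + l + 1)) ^ 2 ≤ 1 / (x + 1 / 2 + l) - 1 / (x + 1 / 2 + l + 1) := by
    intro l
    rw [div_sub_div _ _ (by positivity) (by positivity), div_pow,
      div_le_div_iff₀ (by positivity) (by positivity)]
    nlinarith
  have hge : ∀ l : ℕ, 1 / (x + 1 + l) - 1 / (x + 1 + l + 1) ≤ (1 / (x + l + 1)) ^ 2 := by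
    intro l
    rw [div_sub_div _ _ (by positivity) (by positivity), div_pow,
      div_le_div_iff₀ (by positivity) (by positivity)]
    nlinarith
  have hsum := hupper.summable.of_nonneg_of_le (fun l => by positivity) hle
  exact ⟨hsum, hlower.tsum_eq ▸ hlower.summable.tsum_le_tsum hge hsum,
    hupper.tsum_eq ▸ hsum.tsum_le_tsum hle hupper.summable⟩

lemma tendsto_mul_tsum_floor_one_div_sq :
    Tendsto (fun T : ℝ => T * ∑' l : ℕ, (1 / ((⌊T⌋₊ : ℝ) + l + 1)) ^ 2) atTop (𝓝 1) := by
  have hlim : ∀ s : ℝ, Tendsto (fun T : ℝ => T / ((⌊T⌋₊ : ℝ) + s)) atTop (𝓝 1) := fun s => by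
    simpa using (tendsto_nat_floor_add_div_atTop s).inv₀ one_ne_zero
  refine tendsto_of_tendsto_of_tendsto_of_le_of_le' (hlim 1) (hlim (1 / 2)) ?_ ?_ <;>
    filter_upwards [eventually_gt_atTop 0] with T hT <;>
    rw [div_eq_mul_one_div] <;> gcongr
  · exact (tsum_one_div_add_sq_bounds (Nat.cast_nonneg _)).2.1
  · exact (tsum_one_div_add_sq_bounds (Nat.cast_nonneg _)).2.2

/-- The series in `Hn τ S R m n c`, divided by `(τ/π)²`, in the variable `T = (τ/π) c^(-1/m)`,
the index beyond which the kernel weights vanish. -/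
noncomputable def shrinkageSum (m : ℕ) (T : ℝ) : ℝ :=
  ∑' l : ℕ, (1 / ((l : ℝ) + 1)) ^ 2 * ((max 0 (1 - (((l : ℝ) + 1) / T) ^ m)) ^ 2 - 1)

lemma shrinkageSum_eq {m : ℕ} (hm : 2 ≤ m) {T : ℝ} (hT : 0 < T) :
    shrinkageSum m T = (∑ i ∈ range ⌊T⌋₊, ((i : ℝ) + 1) ^ (2 * m - 2)) / T ^ (2 * m)
      - 2 * (∑ i ∈ range ⌊T⌋₊, ((i : ℝ) + 1) ^ (m - 2)) / T ^ m
      - ∑' l : ℕ, (1 / ((⌊T⌋₊ : ℝ) + l + 1)) ^ 2 := by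
  set N := ⌊T⌋₊
  set f : ℕ → ℝ := fun l =>
    (1 / ((l : ℝ) + 1)) ^ 2 * ((max 0 (1 - (((l : ℝ) + 1) / T) ^ m)) ^ 2 - 1)
  have hf : Summable f := by
    refine Summable.of_norm_bounded (tsum_one_div_add_sq_bounds le_rfl).1 fun l => ?_
    have hK₀ : 0 ≤ max 0 (1 - (((l : ℝ) + 1) / T) ^ m) := le_max_left _ _
    have hK₁ : max 0 (1 - (((l : ℝ) + 1) / T) ^ m) ≤ 1 :=
      max_le zero_le_one (by simp only [sub_le_self_iff]; positivity)
    rw [Real.norm_eq_abs, abs_mul, abs_of_nonneg (by positivity), zero_add]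
    refine mul_le_of_le_one_right (by positivity) (abs_le.2 ⟨?_, ?_⟩) <;> nlinarith
  obtain ⟨k, rfl⟩ : ∃ k, m = k + 2 := ⟨m - 2, by omega⟩
  have hhead : ∀ i ∈ range N, f i = ((i : ℝ) + 1) ^ (2 * (k + 2) - 2) / T ^ (2 * (k + 2))
      - 2 * (((i : ℝ) + 1) ^ (k + 2 - 2) / T ^ (k + 2)) := by
    intro i hi
    have hiT : (i : ℝ) + 1 ≤ T := by
      have := Nat.floor_le hT.le
      have : ((i + 1 : ℕ) : ℝ) ≤ N := Nat.cast_le.2 (mem_range.1 hi)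
      push_cast at this; linarith
    have hx : (((i : ℝ) + 1) / T) ^ (k + 2) ≤ 1 :=
      pow_le_one₀ (by positivity) ((div_le_one hT).2 hiT)
    simp only [f]
    rw [max_eq_right (sub_nonneg.2 hx), show 2 * (k + 2) - 2 = 2 * k + 2 by omega,
      show k + 2 - 2 = k by omega]
    simp only [div_pow, one_div]
    field_simp
    ring
  have htail : ∀ l : ℕ, f (l + N) = -(1 / ((N : ℝ) + l + 1)) ^ 2 := by
    intro l
    have hTl : T ≤ (N : ℝ) + l + 1 := by
      have := Nat.lt_floor_add_one T
      have : (0 : ℝ) ≤ l := Nat.cast_nonneg l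
      linarith
    have hx : 1 ≤ (((N : ℝ) + l + 1) / T) ^ (k + 2) :=
      one_le_pow₀ ((one_le_div hT).2 hTl)
    simp only [f, Nat.cast_add, add_comm (l : ℝ), max_eq_left (sub_nonpos.2 hx)]
    ring
  rw [shrinkageSum, ← hf.sum_add_tsum_nat_add N, sum_congr rfl hhead, tsum_congr htail, tsum_neg,
    sum_sub_distrib, ← mul_sum, ← sum_div, ← sum_div]
  ring

lemma tendsto_mul_shrinkageSum {m : ℕ} (hm : 2 ≤ m) :
    Tendsto (fun T => T * shrinkageSum m T) atTop
      (𝓝 (1 / (2 * m - 1) - 2 * (1 / (m - 1)) - 1)) := by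
  obtain ⟨k, rfl⟩ : ∃ k, m = k + 2 := ⟨m - 2, by omega⟩
  have hlim := ((tendsto_sum_range_floor_pow_div (2 * k + 2)).sub
    ((tendsto_sum_range_floor_pow_div k).const_mul 2)).sub tendsto_mul_tsum_floor_one_div_sq
  rw [show ((2 * k + 2 : ℕ) : ℝ) + 1 = 2 * ((k + 2 : ℕ) : ℝ) - 1 by push_cast; ring,
    show (k : ℝ) + 1 = ((k + 2 : ℕ) : ℝ) - 1 by push_cast; ring] at hlim
  refine hlim.congr' ?_
  filter_upwards [eventually_gt_atTop 0] with T hT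
  rw [shrinkageSum_eq hm hT, show 2 * (k + 2) - 2 = 2 * k + 2 by omega, show k + 2 - 2 = k by omega]
  field_simp
  ring

lemma Hn_inv_pow_eq (τ S R : ℝ) (hτ : τ ≠ 0) (m n : ℕ) {T : ℝ} (hT : 0 < T) :
    Hn τ S R m n (((π / τ) * T) ^ m)⁻¹
      = S / n * (τ / π) ^ 2 * shrinkageSum m T + (((π / τ) * T) ^ m)⁻¹ ^ 2 * R := by
  rw [Hn, shrinkageSum, ← tsum_mul_left, ← tsum_mul_left]
  congr 2
  funext l
  have : (π * ((l : ℝ) + 1) / τ) ^ m * (((π / τ) * T) ^ m)⁻¹ = (((l : ℝ) + 1) / T) ^ m := by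
    rw [← inv_pow, ← mul_pow]
    congr 1
    field_simp
  rw [this]
  field_simp

lemma rpow_mul_Hn_eq (τ S R : ℝ) (hτ : 0 < τ) (m : ℕ) {n : ℕ} (hn : 0 < n) {A : ℝ} (hA : 0 < A) :
    (n : ℝ) ^ (2 * (m : ℝ) / (2 * m - 1)) * Hn τ S R m n ((A / n) ^ ((m : ℝ) / (2 * m - 1)))
      = S * (τ / π) * A ^ (1 / (2 * (m : ℝ) - 1)) *
          ((τ / π * ((n : ℝ) / A) ^ (1 / (2 * (m : ℝ) - 1))) *
            shrinkageSum m (τ / π * ((n : ℝ) / A) ^ (1 / (2 * (m : ℝ) - 1))))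
        + R * A ^ (2 * (m : ℝ) / (2 * m - 1)) := by
  set q : ℝ := 1 / (2 * (m : ℝ) - 1) with hq
  set e : ℝ := 2 * (m : ℝ) / (2 * m - 1) with he
  set T := τ / π * ((n : ℝ) / A) ^ q
  have hn' : (0 : ℝ) < n := Nat.cast_pos.2 hn
  have h2m : 2 * (m : ℝ) - 1 ≠ 0 := by
    rw [sub_ne_zero]
    norm_cast
    omega
  have hT : 0 < T := by positivity
  have hπT : π / τ * T = (n / A) ^ q := by
    simp only [T]
    field_simp
  have hc : (A / n) ^ ((m : ℝ) / (2 * m - 1)) = (((π / τ) * T) ^ m)⁻¹ := by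
    rw [hπT, ← Real.rpow_natCast, ← Real.rpow_mul (by positivity), ← Real.inv_rpow (by positivity),
      inv_div, hq]
    congr 1
    field_simp
  have hnq : (n : ℝ) ^ e = n * (A ^ q * (π / τ * T)) := by
    rw [hπT, ← Real.mul_rpow hA.le (by positivity), mul_div_cancel₀ _ hA.ne',
      show e = 1 + q by rw [he, hq]; field_simp; ring, Real.rpow_add hn', Real.rpow_one]
  have hnc : (n : ℝ) ^ e * ((A / n) ^ ((m : ℝ) / (2 * m - 1))) ^ 2 = A ^ e := by
    rw [← Real.rpow_natCast, ← Real.rpow_mul (by positivity),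
      show (m : ℝ) / (2 * m - 1) * ((2 : ℕ) : ℝ) = e by rw [he]; push_cast; ring,
      ← Real.mul_rpow hn'.le (by positivity), mul_div_cancel₀ _ hn'.ne']
  rw [← hnc, hc, Hn_inv_pow_eq τ S R hτ.ne' m n hT, hnq]
  field_simp

noncomputable def pinskerScale (τ S R : ℝ) (m : ℕ) : ℝ :=
  S / R * (τ / π) * m / ((2 * m - 1) * (m - 1))

lemma pinskerScale_pos {τ S R : ℝ} (hτ : 0 < τ) (hS : 0 < S) (hR : 0 < R) {m : ℕ} (hm : 1 < m) :
    0 < pinskerScale τ S R m := by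
  have hm' : (1 : ℝ) < m := by exact_mod_cast hm
  exact div_pos (by positivity) (by nlinarith)

lemma alphaStar_eq (τ S R : ℝ) (m n : ℕ) :
    alphaStar τ S R m n = (pinskerScale τ S R m / n) ^ ((m : ℝ) / (2 * m - 1)) := by
  rw [alphaStar, pinskerScale]
  congr 1
  ring

lemma neg_PiTau_eq {τ S R : ℝ} (hR : R ≠ 0) {m : ℕ} (hm : 1 < m)
    (hA : 0 < pinskerScale τ S R m) :
    -PiTau τ S R m = S * (τ / π) * pinskerScale τ S R m ^ (1 / (2 * (m : ℝ) - 1))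
        * (1 / (2 * m - 1) - 2 * (1 / (m - 1)) - 1)
      + R * pinskerScale τ S R m ^ (2 * (m : ℝ) / (2 * m - 1)) := by
  have hm' : (1 : ℝ) < m := by exact_mod_cast hm
  have hm1 : (m : ℝ) - 1 ≠ 0 := by linarith
  have h2m1 : 2 * (m : ℝ) - 1 ≠ 0 := by linarith
  rw [PiTau, show S * τ / (π * R) * m / ((2 * m - 1) * (m - 1)) = pinskerScale τ S R m by
      rw [pinskerScale]; ring,
    show 2 * (m : ℝ) / (2 * m - 1) = 1 + 1 / (2 * m - 1) by field_simp; ring,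
    Real.rpow_add hA, Real.rpow_one]
  generalize pinskerScale τ S R m ^ (1 / (2 * (m : ℝ) - 1)) = X
  rw [pinskerScale]
  field_simp
  ring

/-- The shrinkage level `α*_n` attains the second order constant:
`n^{2m/(2m-1)} H_n(α*_n) → -Π_τ` as `n → ∞`. -/
theorem envelope_attains_pinsker_constant
    (τ S R : ℝ) (hτ : 0 < τ) (hS : 0 < S) (hR : 0 < R) (m : ℕ) (hm : 1 < m) :
    Tendsto (fun n : ℕ =>
        (n:ℝ) ^ ((2*(m:ℝ))/(2*(m:ℝ)-1)) * Hn τ S R m n (alphaStar τ S R m n))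
      atTop (nhds (-(PiTau τ S R m))) := by
  set A := pinskerScale τ S R m
  have hA : 0 < A := pinskerScale_pos hτ hS hR hm
  have hm' : (1 : ℝ) < m := by exact_mod_cast hm
  have hq : 0 < 1 / (2 * (m : ℝ) - 1) := one_div_pos.2 (by linarith)
  have hT : Tendsto (fun n : ℕ => τ / π * ((n : ℝ) / A) ^ (1 / (2 * (m : ℝ) - 1))) atTop atTop :=
    ((tendsto_rpow_atTop hq).comp (tendsto_natCast_atTop_atTop.atTop_div_const hA)).const_mul_atTop
      (div_pos hτ pi_pos)
  have hlim := (((tendsto_mul_shrinkageSum hm).comp hT).const_mul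
    (S * (τ / π) * A ^ (1 / (2 * (m : ℝ) - 1)))).add_const (R * A ^ (2 * (m : ℝ) / (2 * m - 1)))
  rw [neg_PiTau_eq hR.ne' hm hA]
  refine hlim.congr' ?_
  filter_upwards [eventually_gt_atTop 0] with n hn
  rw [alphaStar_eq, rpow_mul_Hn_eq τ S R hτ m hn hA]
  rfl
end
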